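/- Let μ be a finite complex Borel measure on ℝ with compact support, and define m(ξ) := −μ([ξ,∞)) = −∫ 1_{(−∞,t]}(ξ) dμ(t), so that m is a compactly supported function of bounded variation. Then for every Schwartz function f on ℝ, every 0 < r < ∞, and every x ∈ ℝ, 𝒱^r( λ ↦ ℱ^{−1}( m(ξ−λ) f̂(ξ) )(x) ) ≤ ‖μ‖_{TV} · 𝒱^r( λ ↦ S_λ f(x) ), where ‖μ‖_{TV} is the total variation norm of μ. -/

import Mathlib

open MeasureTheory
open scoped ENNReal NNReal

/-- `e(t) = e^{2πit}`. -/
noncomputable def eC (t : ℝ) : ℂ := Complex.exp (2 * Real.pi * Complex.I * t)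

/-- The Fourier transform of a Schwartz function: `f̂(ξ) = ∫ f(y) e(-ξy) dy`. -/
noncomputable def fhat (f : SchwartzMap ℝ ℂ) (ξ : ℝ) : ℂ := ∫ y : ℝ, f y * eC (-(ξ * y))

/-- The `r`-variation of a family `λ ↦ g(λ)` of complex numbers (values in `ℝ≥0∞`):
the supremum of `(Σ_i |g(λ_{i+1}) - g(λ_i)|^r)^{1/r}` over finite increasing sequences. -/
noncomputable def rVar (r : ℝ) (g : ℝ → ℂ) : ℝ≥0∞ :=
  ⨆ (n : ℕ) (ls : Fin (n+1) → ℝ) (_ : StrictMono ls),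
    (∑ i : Fin n, (‖g (ls i.succ) - g (ls i.castSucc)‖₊ : ℝ≥0∞) ^ r) ^ (1/r)

/-!
By Fubini, the multiplier `m(ξ - λ)` turns the family into an average of translates of the
partial Fourier integrals: `F(λ) = -∫ h(t) S_{t+λ} f(x) dν(t)`, where `S_u f(x)` is a bounded
continuous function of `u`. For `r ≥ 1` the vector of increments of `F` along a partition is the
`ν`-integral of `h(t)` times the increments of `S f(x)` along the translated partition, so
Minkowski's inequality in `ℓ^r` gives the bound `ν(ℝ) · 𝒱^r`. For `r < 1` the `r`-variation of a
continuous function is infinite unless the function is constant: along a fine partition all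
increments `q` are at most `ε`, and `q^r ≥ ε^(r-1) q`.
-/

open Set Filter Topology
open scoped BoundedContinuousFunction

lemma norm_eC (t : ℝ) : ‖eC t‖ = 1 := by
  rw [eC, show (2 : ℂ) * Real.pi * Complex.I * t = ↑(2 * Real.pi * t) * Complex.I by
    push_cast; ring, Complex.norm_exp_ofReal_mul_I]

@[fun_prop]
lemma continuous_eC : Continuous eC := by
  unfold eC; fun_prop

lemma fhat_eq_fourier (f : SchwartzMap ℝ ℂ) : fhat f = ⇑(SchwartzMap.fourierTransformCLM ℂ f) := by
  funext ξ
  rw [SchwartzMap.fourierTransformCLM_apply, SchwartzMap.fourier_coe, Real.fourier_eq', fhat]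
  congr 1 with y
  rw [smul_eq_mul, mul_comm, eC, Real.inner_apply]
  push_cast
  ring_nf

lemma integrable_fhat_mul_eC (f : SchwartzMap ℝ ℂ) (x : ℝ) :
    Integrable fun ξ => fhat f ξ * eC (ξ * x) := by
  rw [fhat_eq_fourier]
  exact (SchwartzMap.integrable _).mul_bdd (by fun_prop) (ae_of_all _ fun ξ => (norm_eC _).le)

lemma Fin.sum_succ_sub_castSucc {G : Type*} [AddCommGroup G] {n : ℕ} (f : Fin (n + 1) → G) :
    ∑ i : Fin n, (f i.succ - f i.castSucc) = f (Fin.last n) - f 0 := by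
  induction n with
  | zero => simp
  | succ n ih =>
    have := ih (f ∘ Fin.castSucc)
    simp only [Function.comp_apply, ← Fin.succ_castSucc] at this
    rw [Fin.sum_univ_castSucc, this, Fin.succ_last, Fin.castSucc_zero]
    abel

lemma Real.mul_rpow_sub_one_le_rpow {q ε r : ℝ} (hq : 0 ≤ q) (hqε : q ≤ ε) (hr : 0 < r)
    (hr1 : r ≤ 1) :
    ε ^ (r - 1) * q ≤ q ^ r := by
  rcases hq.eq_or_lt with rfl | hq
  · simp [Real.zero_rpow hr.ne']
  calc ε ^ (r - 1) * q ≤ q ^ (r - 1) * q :=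
        mul_le_mul_of_nonneg_right (Real.rpow_le_rpow_of_nonpos hq hqε (by linarith)) hq.le
    _ = q ^ r := by rw [Real.rpow_sub_one hq.ne', div_mul_cancel₀ _ hq.ne']

section rVar

variable {r : ℝ} {g : ℝ → ℂ}

lemma le_rVar {n : ℕ} {ls : Fin (n + 1) → ℝ} (hls : StrictMono ls) :
    (∑ i : Fin n, (‖g (ls i.succ) - g (ls i.castSucc)‖₊ : ℝ≥0∞) ^ r) ^ (1 / r) ≤ rVar r g :=
  le_iSup_of_le n <| le_iSup_of_le ls <| le_iSup_of_le hls le_rfl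

lemma ofReal_le_rVar (hr : 0 < r) {n : ℕ} {ls : Fin (n + 1) → ℝ} (hls : StrictMono ls) :
    ENNReal.ofReal ((∑ i : Fin n, ‖g (ls i.succ) - g (ls i.castSucc)‖ ^ r) ^ (1 / r)) ≤
      rVar r g := by
  refine le_of_eq_of_le ?_ (le_rVar hls)
  rw [← ENNReal.ofReal_rpow_of_nonneg (by positivity) (by positivity),
    ENNReal.ofReal_sum_of_nonneg (fun i _ => by positivity)]
  simp_rw [← ENNReal.ofReal_rpow_of_nonneg (norm_nonneg _) hr.le, ofReal_norm, enorm_eq_nnnorm]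

lemma rVar_const (hr : 0 < r) (c : ℂ) : rVar r (fun _ => c) = 0 := by
  simp [rVar, ENNReal.zero_rpow_of_pos hr, hr]

lemma rVar_neg : rVar r (fun u => -g u) = rVar r g := by
  simp only [rVar, ← neg_sub', nnnorm_neg]

lemma rVar_eq_iSup_enorm {p : ℝ≥0∞} [Fact (1 ≤ p)] (hp : p ≠ ⊤) :
    rVar p.toReal g = ⨆ (n : ℕ) (ls : Fin (n + 1) → ℝ) (_ : StrictMono ls),
      ‖WithLp.toLp p fun i : Fin n => g (ls i.succ) - g (ls i.castSucc)‖ₑ := by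
  have hp0 : 0 ≤ p.toReal := ENNReal.toReal_nonneg
  simp only [rVar, enorm_eq_nnnorm, PiLp.nnnorm_eq_sum hp,
    ENNReal.coe_rpow_of_nonneg _ (one_div_nonneg.2 hp0), ENNReal.ofNNReal_finsetSum,
    ENNReal.coe_rpow_of_nonneg _ hp0]

end rVar

lemma Continuous.exists_strictMono_norm_sub_le {E : Type*} [SeminormedAddCommGroup E] {g : ℝ → E}
    (hg : Continuous g) {a b : ℝ} (hab : a < b) {ε : ℝ} (hε : 0 < ε) :
    ∃ (n : ℕ) (ls : Fin (n + 1) → ℝ), StrictMono ls ∧ ls 0 = a ∧ ls (Fin.last n) = b ∧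
      ∀ i : Fin n, ‖g (ls i.succ) - g (ls i.castSucc)‖ ≤ ε := by
  obtain ⟨δ, hδ, hgδ⟩ := Metric.uniformContinuousOn_iff.1
    (isCompact_Icc.uniformContinuousOn_of_continuous hg.continuousOn) ε hε
  obtain ⟨n, hn⟩ := exists_nat_gt ((b - a) / δ)
  have hn0 : (0 : ℝ) < n := (div_pos (sub_pos.2 hab) hδ).trans hn
  set s := (b - a) / n with hs
  have hs0 : 0 < s := div_pos (sub_pos.2 hab) hn0
  have hsδ : s < δ := by rw [hs, div_lt_iff₀ hn0]; rwa [div_lt_iff₀ hδ, mul_comm] at hn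
  have hmem : ∀ i : Fin (n + 1), a + i * s ∈ Icc a b := fun i => by
    have hi : (i : ℝ) ≤ n := by exact_mod_cast Fin.is_le i
    refine ⟨by nlinarith, ?_⟩
    calc a + i * s ≤ a + n * s := by gcongr
      _ = b := by rw [hs]; field_simp; ring
  refine ⟨n, fun i => a + i * s, fun i j hij => ?_, by simp, ?_, fun i => ?_⟩
  · simp only [add_lt_add_iff_left]
    gcongr
    exact_mod_cast hij
  · simp only [Fin.val_last]
    rw [hs]; field_simp; ring
  · rw [← dist_eq_norm]
    refine (hgδ _ (hmem _) _ (hmem _) ?_).le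
    simpa [Real.dist_eq, add_mul, abs_of_pos hs0] using hsδ

theorem rVar_eq_top_of_continuous {r : ℝ} {g : ℝ → ℂ} (hr : 0 < r) (hr1 : r < 1)
    (hg : Continuous g) {a b : ℝ} (hne : g a ≠ g b) : rVar r g = ⊤ := by
  wlog hab : a < b generalizing a b
  · exact this hne.symm ((not_lt.1 hab).lt_of_ne fun h => hne (h ▸ rfl))
  have hd : 0 < ‖g b - g a‖ := norm_pos_iff.2 (sub_ne_zero.2 hne.symm)
  have hlower : ∀ ε > 0, ENNReal.ofReal ((ε ^ (r - 1) * ‖g b - g a‖) ^ (1 / r)) ≤ rVar r g := by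
    intro ε hε
    obtain ⟨n, ls, hls, h0, hlast, hsmall⟩ := hg.exists_strictMono_norm_sub_le hab hε
    refine le_trans (ENNReal.ofReal_le_ofReal ?_) (ofReal_le_rVar hr hls)
    gcongr
    calc ε ^ (r - 1) * ‖g b - g a‖
        = ε ^ (r - 1) * ‖∑ i : Fin n, (g (ls i.succ) - g (ls i.castSucc))‖ := by
          rw [Fin.sum_succ_sub_castSucc fun i => g (ls i), hlast, h0]
      _ ≤ ∑ i : Fin n, ε ^ (r - 1) * ‖g (ls i.succ) - g (ls i.castSucc)‖ := by
          rw [← Finset.mul_sum]; gcongr; exact norm_sum_le _ _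
      _ ≤ ∑ i : Fin n, ‖g (ls i.succ) - g (ls i.castSucc)‖ ^ r := by
          gcongr with i
          exact Real.mul_rpow_sub_one_le_rpow (norm_nonneg _) (hsmall i) hr hr1.le
  have hlim : Tendsto (fun ε => ENNReal.ofReal ((ε ^ (r - 1) * ‖g b - g a‖) ^ (1 / r)))
      (𝓝[>] 0) (𝓝 ⊤) :=
    ENNReal.tendsto_ofReal_atTop.comp <| (tendsto_rpow_atTop (by positivity)).comp <|
      (tendsto_rpow_neg_nhdsGT_zero (by linarith)).atTop_mul_const hd
  exact top_le_iff.1 (le_of_tendsto hlim (eventually_nhdsWithin_of_forall hlower))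

section Convexity

variable {ν : Measure ℝ} {h : ℝ → ℂ} {r : ℝ}

lemma MeasureTheory.Integrable.mul_boundedContinuous_comp_add (hh : Integrable h ν) (G : ℝ →ᵇ ℂ)
    (lam : ℝ) :
    Integrable (fun t => h t * G (t + lam)) ν :=
  hh.mul_bdd (G.continuous.comp (continuous_add_const lam)).aestronglyMeasurable
    (ae_of_all _ fun _ => G.norm_coe_le_norm _)

theorem rVar_integral_mul_comp_add_le_of_one_le (hh : Integrable h ν) (G : ℝ →ᵇ ℂ)
    (hr : 1 ≤ r) :
    rVar r (fun lam => ∫ t, h t * G (t + lam) ∂ν) ≤ (∫⁻ t, ‖h t‖ₑ ∂ν) * rVar r G := by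
  obtain ⟨p, hp, rfl⟩ : ∃ p : ℝ≥0∞, p ≠ ⊤ ∧ p.toReal = r :=
    ⟨ENNReal.ofReal r, ENNReal.ofReal_ne_top, ENNReal.toReal_ofReal (by linarith)⟩
  have : Fact (1 ≤ p) := ⟨by simpa using (ENNReal.ofReal_le_iff_le_toReal hp).2 hr⟩
  rw [rVar_eq_iSup_enorm hp, rVar_eq_iSup_enorm hp]
  refine iSup_le fun n => iSup_le fun ls => iSup_le fun hls => ?_
  set w : ℝ → PiLp p (fun _ : Fin n => ℂ) :=
    fun t => WithLp.toLp p fun i => G (t + ls i.succ) - G (t + ls i.castSucc)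
  have hw : ∀ t, ‖w t‖ₑ ≤ ⨆ (n : ℕ) (ls : Fin (n + 1) → ℝ) (_ : StrictMono ls),
      ‖WithLp.toLp p fun i : Fin n => G (ls i.succ) - G (ls i.castSucc)‖ₑ := fun t =>
    le_iSup_of_le n <| le_iSup_of_le (fun i => t + ls i) <|
      le_iSup_of_le (fun i j hij => (add_lt_add_iff_left t).2 (hls hij)) le_rfl
  have hint : ∀ i, Integrable (fun t => (h t • w t) i) ν := fun i => by
    simp only [w, PiLp.smul_apply, smul_eq_mul, mul_sub]
    exact (hh.mul_boundedContinuous_comp_add G _).sub (hh.mul_boundedContinuous_comp_add G _)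
  have hincr : (WithLp.toLp p fun i : Fin n =>
      (∫ t, h t * G (t + ls i.succ) ∂ν) - ∫ t, h t * G (t + ls i.castSucc) ∂ν) =
      ∫ t, h t • w t ∂ν := by
    ext i
    rw [eval_integral_piLp hint, PiLp.toLp_apply, ← integral_sub
      (hh.mul_boundedContinuous_comp_add G _) (hh.mul_boundedContinuous_comp_add G _)]
    simp [w, mul_sub]
  calc _ = ‖∫ t, h t • w t ∂ν‖ₑ := by rw [hincr]
    _ ≤ ∫⁻ t, ‖h t • w t‖ₑ ∂ν := enorm_integral_le_lintegral_enorm _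
    _ ≤ ∫⁻ t, ‖h t‖ₑ * ⨆ (n : ℕ) (ls : Fin (n + 1) → ℝ) (_ : StrictMono ls),
          ‖WithLp.toLp p fun i : Fin n => G (ls i.succ) - G (ls i.castSucc)‖ₑ ∂ν := by
        gcongr with t
        rw [enorm_smul]
        gcongr
        exact hw t
    _ = _ := lintegral_mul_const'' _ hh.aemeasurable.enorm

theorem rVar_integral_mul_comp_add_le (hh : Integrable h ν) (G : ℝ →ᵇ ℂ) (hr : 0 < r) :
    rVar r (fun lam => ∫ t, h t * G (t + lam) ∂ν) ≤ (∫⁻ t, ‖h t‖ₑ ∂ν) * rVar r G := by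
  rcases le_or_gt 1 r with hr1 | hr1
  · exact rVar_integral_mul_comp_add_le_of_one_le hh G hr1
  set F := fun lam => ∫ t, h t * G (t + lam) ∂ν
  by_cases hF : ∀ u, F u = F 0
  · rw [show F = fun _ => F 0 from funext hF, rVar_const hr]
    exact zero_le
  obtain ⟨u, hu⟩ := not_forall.1 hF
  obtain ⟨a, b, hab⟩ : ∃ a b, G a ≠ G b := by
    by_contra! hG
    exact hu (integral_congr_ae (ae_of_all _ fun t => by simp only [hG (t + u) (t + 0)]))
  have hh0 : ∫⁻ t, ‖h t‖ₑ ∂ν ≠ 0 := by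
    rw [← eLpNorm_one_eq_lintegral_enorm, Ne,
      eLpNorm_eq_zero_iff hh.aestronglyMeasurable one_ne_zero]
    intro h0
    refine hu ((integral_eq_zero_of_ae ?_).trans (integral_eq_zero_of_ae ?_).symm) <;>
      filter_upwards [h0] with t ht <;> simp [ht]
  rw [rVar_eq_top_of_continuous hr hr1 G.continuous hab, ENNReal.mul_top hh0]
  exact le_top

end Convexity

lemma MeasureTheory.Integrable.continuous_setIntegral_Iio {E : Type*} [NormedAddCommGroup E]
    [NormedSpace ℝ E] {φ : ℝ → E} (hφ : Integrable φ) :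
    Continuous fun u => ∫ ξ in Iio u, φ ξ :=
  continuous_iff_continuousAt.2 fun u =>
    (hφ.integrableOn.continuousOn_Iic_primitive_Iio (a₀ := u + 1)).continuousAt
      (Iic_mem_nhds (lt_add_one u))

theorem integral_setIntegral_Ici_mul {𝕜 : Type*} [RCLike 𝕜] {ν : Measure ℝ} [SFinite ν]
    {h φ : ℝ → 𝕜} (hh : Integrable h ν) (hφ : Integrable φ) (lam : ℝ) :
    ∫ ξ, (∫ t in Ici (ξ - lam), h t ∂ν) * φ ξ = ∫ t, h t * (∫ ξ in Iio (t + lam), φ ξ) ∂ν := by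
  have hS : MeasurableSet {z : ℝ × ℝ | z.1 - lam ≤ z.2} :=
    measurableSet_le (measurable_fst.sub_const lam) measurable_snd
  have hint : Integrable (Function.uncurry fun ξ t => (Ici (ξ - lam)).indicator h t * φ ξ)
      (volume.prod ν) := by
    refine ((hφ.mul_prod hh).indicator hS).congr (ae_of_all _ fun z => ?_)
    simp [indicator_apply, Function.uncurry, mul_comm]
  have hswap : ∀ ξ t, (Ici (ξ - lam)).indicator h t * φ ξ =
      (Iic (t + lam)).indicator (fun ξ => h t * φ ξ) ξ := fun ξ t => by
    simp only [indicator_apply, mem_Ici, mem_Iic, sub_le_iff_le_add]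
    split_ifs <;> simp
  calc ∫ ξ, (∫ t in Ici (ξ - lam), h t ∂ν) * φ ξ
      = ∫ ξ, ∫ t, (Ici (ξ - lam)).indicator h t * φ ξ ∂ν := by
        simp_rw [← integral_indicator measurableSet_Ici, integral_mul_const]
    _ = ∫ t, (∫ ξ, (Ici (ξ - lam)).indicator h t * φ ξ) ∂ν := integral_integral_swap hint
    _ = ∫ t, h t * (∫ ξ in Iio (t + lam), φ ξ) ∂ν := by
        simp_rw [hswap, integral_indicator measurableSet_Iic, integral_const_mul,
          integral_Iic_eq_integral_Iio]

-- The measure `μ` of the paper is `h • ν` with `‖h‖ = 1`, so that `‖μ‖_TV = ν(ℝ)`.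
theorem variation_truncation_convexity_general
    (ν : Measure ℝ) [IsFiniteMeasure ν]
    (h : ℝ → ℂ) (hmeas : Measurable h) (hnorm : ∀ t, ‖h t‖ = 1)
    (f : SchwartzMap ℝ ℂ) (r : ℝ) (hr : 0 < r) (x : ℝ) :
    rVar r (fun lam => ∫ ξ : ℝ, (-(∫ t in Set.Ici (ξ - lam), h t ∂ν)) * fhat f ξ * eC (ξ * x))
      ≤ ν Set.univ * rVar r (fun lam => ∫ ξ in Set.Iio lam, fhat f ξ * eC (ξ * x)) := by
  set φ := fun ξ => fhat f ξ * eC (ξ * x)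
  have hφ : Integrable φ := integrable_fhat_mul_eC f x
  have hh : Integrable h ν :=
    .of_bound hmeas.aestronglyMeasurable 1 (ae_of_all _ fun t => (hnorm t).le)
  let S : ℝ →ᵇ ℂ := .ofNormedAddCommGroup (fun u => ∫ ξ in Iio u, φ ξ)
    hφ.continuous_setIntegral_Iio (∫ ξ, ‖φ ξ‖) fun u => (norm_integral_le_integral_norm _).trans
      (setIntegral_le_integral hφ.norm (ae_of_all _ fun _ => norm_nonneg _))
  have hmass : ∫⁻ t, ‖h t‖ₑ ∂ν = ν univ := by
    simp only [← ofReal_norm, hnorm, ENNReal.ofReal_one, lintegral_one]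
  have hmult : (fun lam => ∫ ξ, (-(∫ t in Ici (ξ - lam), h t ∂ν)) * fhat f ξ * eC (ξ * x)) =
      fun lam => -∫ t, h t * S (t + lam) ∂ν := funext fun lam => by
    change _ = -∫ t, h t * (∫ ξ in Iio (t + lam), φ ξ) ∂ν
    rw [← integral_setIntegral_Ici_mul hh hφ lam, ← integral_neg]
    simp only [φ, neg_mul, mul_assoc]
  rw [hmult, rVar_neg, ← hmass]
  exact rVar_integral_mul_comp_add_le hh S hr

/-- Uraltsev's convexity lemma, variational form. A finite complex Borel measure `μ` of
compact support is encoded as `μ = h dν` with `ν` a finite compactly supported measure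
and `‖h‖ = 1` pointwise, so that `‖μ‖_TV = ν(ℝ)` and `m(ξ) = -μ([ξ,∞))`. Then pointwise
`𝒱^r(λ ↦ ℱ⁻¹(m(ξ-λ) f̂(ξ))(x)) ≤ ‖μ‖_TV · 𝒱^r(λ ↦ S_λ f(x))`. -/
theorem variation_truncation_convexity
    (ν : Measure ℝ) [IsFiniteMeasure ν]
    (hcomp : ∃ Kset : Set ℝ, IsCompact Kset ∧ ν Ksetᶜ = 0)
    (h : ℝ → ℂ) (hmeas : Measurable h) (hnorm : ∀ t, ‖h t‖ = 1)
    (f : SchwartzMap ℝ ℂ) (r : ℝ) (hr : 0 < r) (x : ℝ) :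
    rVar r (fun lam => ∫ ξ : ℝ, (-(∫ t in Set.Ici (ξ - lam), h t ∂ν)) * fhat f ξ * eC (ξ * x))
      ≤ ν Set.univ * rVar r (fun lam => ∫ ξ in Set.Iio lam, fhat f ξ * eC (ξ * x)) :=
  variation_truncation_convexity_general ν h hmeas hnorm f r hr x
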